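/- arXiv:1407.1158 — 2 statements merged into one kernel-verified Lean document; each statement's English description precedes it below -/
import Mathlib

section
/- Fix P ≥ 1 and sequences (α_k)_{k≥1}, (η_k)_{k≥1} of positive reals with α_k > 2 for all k and η_k/α_k ≤ C k^{−m} for all k, for some constants C > 0 and m > 1/2. Let (λ_{pk})_{1≤p≤P, k≥1} be mutually independent real random variables such that λ_{pk} has the GDP(α_k, η_k) distribution for every p and k. Then almost surely, for every p ∈ {1, …, P}, the series ∑_{k=1}^∞ λ_{pk}² converges; equivalently, max_{1≤p≤P} ∑_{k=1}^∞ λ_{pk}² < ∞ almost surely. -/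
open MeasureTheory ProbabilityTheory

/-- Density of the generalized double Pareto distribution GDP(α, η). -/
noncomputable def gdpPdf (α η x : ℝ) : ℝ :=
  (α / (2 * η)) * (1 + |x| / η) ^ (-(α + 1))

/-- The generalized double Pareto distribution GDP(α, η) as a measure on ℝ. -/
noncomputable def gdpMeasure (α η : ℝ) : Measure ℝ :=
  MeasureTheory.volume.withDensity (fun x => ENNReal.ofReal (gdpPdf α η x))

/-- `X` has the GDP(α, η) distribution under `μ`. -/
def HasGDP {Ω : Type*} [MeasurableSpace Ω] (μ : Measure Ω) (X : Ω → ℝ) (α η : ℝ) : Prop :=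
  Measurable X ∧ Measure.map X μ = gdpMeasure α η

/-!
Fix `s ∈ (1/m, 2)`. The second moment of GDP(α, η) is useless here, since it blows up as
`α → 2`; instead, for `α ≥ 2` the GDP density is dominated, uniformly in `α`, by a constant
multiple of a Pareto-type density with tail exponent `3` at scale `β = η / α`, which gives
`E |λ|^s ≤ c_s β^s`. As `β_k ≤ C k^(-m)` and `s m > 1`, the series `∑_k E |λ_{pk}|^s` converges,
so `∑_k |λ_{pk}|^s < ∞` almost surely. Its terms then tend to `0`, and eventually
`λ_{pk}^2 ≤ |λ_{pk}|^s`.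
-/

open scoped ENNReal

lemma lintegral_comp_div_of_pos (g : ℝ → ℝ≥0∞) {b : ℝ} (hb : 0 < b) :
    ∫⁻ x, g (x / b) = ENNReal.ofReal b * ∫⁻ y, g y := by
  have hb' : b⁻¹ ≠ 0 := inv_ne_zero hb.ne'
  calc ∫⁻ x, g (x / b) = ∫⁻ y, g y ∂(Measure.map (· * b⁻¹) volume) := by
        rw [(measurableEmbedding_mulRight₀ hb').lintegral_map]
        simp only [div_eq_mul_inv]
    _ = ENNReal.ofReal b * ∫⁻ y, g y := by
        rw [Real.map_volume_mul_right hb', lintegral_smul_measure, inv_inv, abs_of_pos hb,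
          smul_eq_mul]

lemma lintegral_one_add_abs_rpow_lt_top {s : ℝ} (hs : s < 2) :
    ∫⁻ y : ℝ, ENNReal.ofReal ((1 + |y|) ^ (s - 3)) < ∞ := by
  have h := finite_integral_one_add_norm (E := ℝ) (μ := volume) (r := 3 - s)
    (by rw [Module.finrank_self]; push_cast; linarith)
  simpa only [Real.norm_eq_abs, neg_sub] using h

theorem Summable.abs_rpow_of_le {ι : Type*} {g : ι → ℝ} {s t : ℝ} (hs : 0 < s) (hst : s ≤ t)
    (h : Summable fun i => |g i| ^ s) : Summable fun i => |g i| ^ t := by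
  refine h.of_norm_bounded_eventually ?_
  filter_upwards [h.tendsto_cofinite_zero.eventually (gt_mem_nhds one_pos)] with i hi
  have hg : |g i| ≤ 1 := by
    by_contra! hg
    exact hi.not_ge (Real.one_le_rpow hg.le hs.le)
  rw [Real.norm_of_nonneg (by positivity)]
  exact Real.rpow_le_rpow_of_exponent_ge' (abs_nonneg _) hg hs.le hst

lemma ae_summable_of_tsum_lintegral_ne_top {Ω ι : Type*} [MeasurableSpace Ω] [Countable ι]
    {μ : Measure Ω} {f : ι → Ω → ℝ} (hf : ∀ i, AEMeasurable (f i) μ) (hf0 : ∀ i ω, 0 ≤ f i ω)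
    (h : ∑' i, ∫⁻ ω, ENNReal.ofReal (f i ω) ∂μ ≠ ∞) : ∀ᵐ ω ∂μ, Summable fun i => f i ω := by
  have hmeas : ∀ i, AEMeasurable (fun ω => ENNReal.ofReal (f i ω)) μ :=
    fun i => (hf i).ennreal_ofReal
  rw [← lintegral_tsum hmeas] at h
  filter_upwards [ae_lt_top' (AEMeasurable.tsum hmeas) h] with ω hω
  simpa only [ENNReal.toReal_ofReal (hf0 _ ω)] using ENNReal.summable_toReal hω.ne

lemma one_add_div_three_pow_le_rpow {α c : ℝ} (hα : 2 ≤ α) (hc : 0 ≤ c) :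
    (1 + c / 3) ^ 3 ≤ (1 + c / α) ^ (α + 1) := by
  have hα0 : 0 < α := by linarith
  have hbase : 0 ≤ 1 + c / α := by positivity
  have hbern : 1 + (α + 1) / 3 * (c / α) ≤ (1 + c / α) ^ ((α + 1) / 3) :=
    one_add_mul_self_le_rpow_one_add (by linarith [div_nonneg hc hα0.le]) (by linarith)
  have hlin : c / 3 ≤ (α + 1) / 3 * (c / α) := by
    rw [div_mul_div_comm, div_le_div_iff₀ (by norm_num) (by positivity)]
    nlinarith
  calc (1 + c / 3) ^ 3 ≤ ((1 + c / α) ^ ((α + 1) / 3)) ^ 3 := by gcongr; linarith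
    _ = (1 + c / α) ^ (α + 1) := by
      rw [← Real.rpow_natCast, ← Real.rpow_mul hbase]; norm_num

lemma measurable_gdpPdf (α η : ℝ) : Measurable (gdpPdf α η) := by
  unfold gdpPdf
  fun_prop

lemma gdpPdf_le {α η : ℝ} (hα : 2 ≤ α) (hη : 0 < η) (x : ℝ) :
    gdpPdf α η x ≤ 27 / (2 * (η / α)) * ((1 + |x| / (η / α)) ^ 3)⁻¹ := by
  have hα0 : 0 < α := by linarith
  set β := η / α with hβ_def
  have hβ : 0 < β := div_pos hη hα0
  set c := |x| / β
  have hc : 0 ≤ c := by positivity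
  have hcube : (1 + c) ^ 3 ≤ 27 * (1 + c / α) ^ (α + 1) := by
    calc (1 + c) ^ 3 ≤ (3 * (1 + c / 3)) ^ 3 := by gcongr; linarith
      _ = 27 * (1 + c / 3) ^ 3 := by ring
      _ ≤ 27 * (1 + c / α) ^ (α + 1) := by gcongr; exact one_add_div_three_pow_le_rpow hα hc
  have hconst : α / (2 * η) = 1 / (2 * β) := by rw [hβ_def]; field_simp
  have hbase : |x| / η = c / α := by simp only [c, hβ_def]; field_simp
  calc gdpPdf α η x = 1 / (2 * β) * ((1 + c / α) ^ (α + 1))⁻¹ := by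
        rw [gdpPdf, Real.rpow_neg (by positivity), hconst, hbase]
    _ = 1 / (2 * β) * (27 * (27 * (1 + c / α) ^ (α + 1))⁻¹) := by ring
    _ ≤ 1 / (2 * β) * (27 * ((1 + c) ^ 3)⁻¹) := by gcongr
    _ = 27 / (2 * β) * ((1 + c) ^ 3)⁻¹ := by ring

lemma lintegral_abs_rpow_gdpMeasure_le {α η s : ℝ} (hα : 2 ≤ α) (hη : 0 < η) (hs : 0 ≤ s) :
    ∫⁻ x, ENNReal.ofReal (|x| ^ s) ∂gdpMeasure α η ≤
      ENNReal.ofReal (27 / 2 * (η / α) ^ s) * ∫⁻ y, ENNReal.ofReal ((1 + |y|) ^ (s - 3)) := by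
  set β := η / α
  have hβ : 0 < β := div_pos hη (by linarith)
  have hpoint (x : ℝ) :
      gdpPdf α η x * |x| ^ s ≤ 27 / 2 * β ^ (s - 1) * (1 + |x / β|) ^ (s - 3) := by
    rw [abs_div, abs_of_pos hβ]
    have hu : 0 < 1 + |x| / β := by positivity
    have habs : |x| ≤ β * (1 + |x| / β) := by
      rw [mul_add, mul_div_cancel₀ _ hβ.ne']
      linarith
    calc gdpPdf α η x * |x| ^ s
        ≤ 27 / (2 * β) * ((1 + |x| / β) ^ 3)⁻¹ * (β * (1 + |x| / β)) ^ s := by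
          gcongr
          exact gdpPdf_le hα hη x
      _ = 27 / 2 * β ^ (s - 1) * (1 + |x| / β) ^ (s - 3) := by
          rw [Real.mul_rpow hβ.le hu.le, Real.rpow_sub_one hβ.ne', Real.rpow_sub hu,
            Real.rpow_ofNat]
          field_simp
  calc ∫⁻ x, ENNReal.ofReal (|x| ^ s) ∂gdpMeasure α η
      = ∫⁻ x, ENNReal.ofReal (gdpPdf α η x * |x| ^ s) := by
        rw [gdpMeasure, lintegral_withDensity_eq_lintegral_mul _
          (measurable_gdpPdf α η).ennreal_ofReal (by fun_prop)]
        congr with x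
        rw [Pi.mul_apply, ENNReal.ofReal_mul (by unfold gdpPdf; positivity)]
    _ ≤ ∫⁻ x, ENNReal.ofReal (27 / 2 * β ^ (s - 1)) *
          ENNReal.ofReal ((1 + |x / β|) ^ (s - 3)) := by
        gcongr with x
        rw [← ENNReal.ofReal_mul (by positivity)]
        exact ENNReal.ofReal_le_ofReal (hpoint x)
    _ = ENNReal.ofReal (27 / 2 * β ^ (s - 1)) *
          (ENNReal.ofReal β * ∫⁻ y, ENNReal.ofReal ((1 + |y|) ^ (s - 3))) := by
        rw [lintegral_const_mul' _ _ ENNReal.ofReal_ne_top,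
          lintegral_comp_div_of_pos (fun y => ENNReal.ofReal ((1 + |y|) ^ (s - 3))) hβ]
    _ = ENNReal.ofReal (27 / 2 * β ^ s) * ∫⁻ y, ENNReal.ofReal ((1 + |y|) ^ (s - 3)) := by
        rw [← mul_assoc, ← ENNReal.ofReal_mul (by positivity), Real.rpow_sub_one hβ.ne']
        field_simp

lemma ae_summable_sq_of_map_eq_gdpMeasure {Ω : Type*} [MeasurableSpace Ω] {μ : Measure Ω}
    {X : ℕ → Ω → ℝ} {α η : ℕ → ℝ} {s : ℝ} (hX : ∀ k, Measurable (X k))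
    (hlaw : ∀ k, Measure.map (X k) μ = gdpMeasure (α k) (η k))
    (hα : ∀ k, 2 ≤ α k) (hη : ∀ k, 0 < η k) (hs0 : 0 < s) (hs2 : s < 2)
    (hsum : Summable fun k => (η k / α k) ^ s) :
    ∀ᵐ ω ∂μ, Summable fun k => X k ω ^ 2 := by
  set J := ∫⁻ y : ℝ, ENNReal.ofReal ((1 + |y|) ^ (s - 3))
  have hmoment (k : ℕ) : ∫⁻ ω, ENNReal.ofReal (|X k ω| ^ s) ∂μ ≤
      J * ENNReal.ofReal (27 / 2 * (η k / α k) ^ s) := by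
    rw [← lintegral_map (f := fun x => ENNReal.ofReal (|x| ^ s)) (by fun_prop) (hX k), hlaw k,
      mul_comm]
    exact lintegral_abs_rpow_gdpMeasure_le (hα k) (hη k) hs0.le
  have hfinite : ∑' k, ∫⁻ ω, ENNReal.ofReal (|X k ω| ^ s) ∂μ ≠ ∞ := by
    refine ne_top_of_le_ne_top ?_ (ENNReal.tsum_le_tsum hmoment)
    rw [ENNReal.tsum_mul_left]
    exact ENNReal.mul_ne_top (lintegral_one_add_abs_rpow_lt_top hs2).ne
      (hsum.mul_left _).tsum_ofReal_ne_top
  filter_upwards [ae_summable_of_tsum_lintegral_ne_top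
    (fun k => ((hX k).abs.pow_const s).aemeasurable) (fun k ω => by positivity) hfinite] with ω hω
  simpa only [Real.rpow_two, sq_abs] using hω.abs_rpow_of_le hs0 hs2.le

theorem gdp_loadings_rows_square_summable_general {Ω : Type*} [MeasurableSpace Ω] (μ : Measure Ω)
    (P : ℕ) (α η : ℕ → ℝ) (C m : ℝ)
    (hC : 0 < C) (hm : 1 / 2 < m)
    (hα : ∀ k : ℕ, 1 ≤ k → 2 < α k) (hη : ∀ k : ℕ, 1 ≤ k → 0 < η k)
    (hbound : ∀ k : ℕ, 1 ≤ k → η k / α k ≤ C * (k : ℝ) ^ (-m))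
    (Λ : Fin P × ℕ → Ω → ℝ) (hmeas : ∀ pk, Measurable (Λ pk))
    (hlaw : ∀ (p : Fin P) (k : ℕ), 1 ≤ k →
      Measure.map (Λ (p, k)) μ = gdpMeasure (α k) (η k)) :
    ∀ᵐ ω ∂μ, ∀ p : Fin P, Summable (fun k : ℕ => (Λ (p, k + 1) ω) ^ 2) := by
  have hm0 : 0 < m := by linarith
  obtain ⟨s, hms, hs2⟩ : ∃ s, 1 / m < s ∧ s < 2 :=
    exists_between (by rw [div_lt_iff₀ hm0]; linarith)
  have hs0 : 0 < s := (one_div_pos.mpr hm0).trans hms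
  have hsm : 1 < s * m := by rwa [div_lt_iff₀ hm0] at hms
  have hscale (k : ℕ) : 0 < η (k + 1) / α (k + 1) :=
    div_pos (hη _ k.succ_pos) (by linarith [hα _ k.succ_pos])
  have hsum : Summable fun k : ℕ => (η (k + 1) / α (k + 1)) ^ s := by
    have hpow : Summable fun k : ℕ => C ^ s * ((k + 1 : ℕ) : ℝ) ^ (-(s * m)) :=
      ((summable_nat_add_iff 1).mpr (Real.summable_nat_rpow.mpr (by linarith))).mul_left _
    refine hpow.of_nonneg_of_le (fun k => (Real.rpow_pos_of_pos (hscale k) s).le) fun k => ?_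
    calc (η (k + 1) / α (k + 1)) ^ s ≤ (C * ((k + 1 : ℕ) : ℝ) ^ (-m)) ^ s :=
          Real.rpow_le_rpow (hscale k).le (hbound _ k.succ_pos) hs0.le
      _ = C ^ s * ((k + 1 : ℕ) : ℝ) ^ (-(s * m)) := by
          rw [Real.mul_rpow hC.le (by positivity), ← Real.rpow_mul (by positivity), neg_mul,
            mul_comm m]
  rw [ae_all_iff]
  exact fun p => ae_summable_sq_of_map_eq_gdpMeasure (fun k => hmeas _)
    (fun k => hlaw p (k + 1) k.succ_pos) (fun k => (hα _ k.succ_pos).le)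
    (fun k => hη _ k.succ_pos) hs0 hs2 hsum

theorem gdp_loadings_rows_square_summable {Ω : Type*} [MeasurableSpace Ω] (μ : Measure Ω)
    [IsProbabilityMeasure μ] (P : ℕ) (hP : 0 < P) (α η : ℕ → ℝ) (C m : ℝ)
    (hC : 0 < C) (hm : 1 / 2 < m)
    (hα : ∀ k : ℕ, 1 ≤ k → 2 < α k) (hη : ∀ k : ℕ, 1 ≤ k → 0 < η k)
    (hbound : ∀ k : ℕ, 1 ≤ k → η k / α k ≤ C * (k : ℝ) ^ (-m))
    (Λ : Fin P × ℕ → Ω → ℝ) (hmeas : ∀ pk, Measurable (Λ pk))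
    (hindep : ProbabilityTheory.iIndepFun Λ μ)
    (hlaw : ∀ (p : Fin P) (k : ℕ), 1 ≤ k →
      Measure.map (Λ (p, k)) μ = gdpMeasure (α k) (η k)) :
    ∀ᵐ ω ∂μ, ∀ p : Fin P, Summable (fun k : ℕ => (Λ (p, k + 1) ω) ^ 2) :=
  gdp_loadings_rows_square_summable_general μ P α η C m hC hm hα hη hbound Λ hmeas hlaw
end

section
/- Let δ > 2 and ρ > 0, set α_k = δ^k and η_k = ρ for k ≥ 1, fix P ≥ 1, and let (λ_{pk})_{1≤p≤P, k≥1} be mutually independent real random variables with λ_{pk} distributed as GDP(α_k, η_k). Then there exists a constant C > 0 depending only on δ and ρ such that for every ε ∈ (0, 1): if K₀ is any integer with K₀ ≥ C·(1 + log(P/ε²)), then for every K ≥ K₀, with probability greater than 1 − ε, for all i, j ∈ {1, …, P} the series ∑_{k=K+1}^∞ |λ_{ik}||λ_{jk}| converges and is strictly less than ε. In particular K₀ can be taken of order (log δ)^{−1} log(P/ε²). -/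
open MeasureTheory ProbabilityTheory

/-!
A GDP(α, η) variable has the exact tail `P(|λ| > t) = (1 + t/η)^(-α)`, which by Bernoulli's
inequality is at most `η / (α t)`. With `α_k = δ^k` and the threshold `t_k = 2^(-k)` this is
`ρ (2/δ)^k`, a geometric sequence because `δ > 2`. By the union bound, with probability at least
`1 - P ρ (2/δ)^(K+1) / (1 - 2/δ)` every `|λ_{pk}|` with `k > K` is at most `2^(-k)`, and then
every tail sum `∑_{k>K} |λ_{ik}| |λ_{jk}|` is at most `∑_{k>K} 4^(-k) = 4^(-K) / 3`. Both error
terms decay exponentially in `K`, so `K ≥ C (1 + log (P/ε²))` makes both smaller than `ε`.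
-/

open Set Filter Topology
open scoped ENNReal

section GDP

variable {α η : ℝ}

lemma gdpPdf_neg (x : ℝ) : gdpPdf α η (-x) = gdpPdf α η x := by
  simp only [gdpPdf, abs_neg]

lemma gdpPdf_nonneg (hα : 0 ≤ α) (hη : 0 ≤ η) (x : ℝ) : 0 ≤ gdpPdf α η x := by
  unfold gdpPdf; positivity

lemma hasDerivAt_neg_gdpTail (hη : 0 < η) {x : ℝ} (hx : 0 ≤ x) :
    HasDerivAt (fun y => -(1 + y / η) ^ (-α) / 2) (gdpPdf α η x) x := by
  have hpos : 0 < 1 + x / η := by positivity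
  have h : HasDerivAt (fun y => 1 + y / η) (1 / η) x :=
    ((hasDerivAt_id' x).div_const η).const_add 1
  refine ((h.rpow_const (p := -α) (Or.inl hpos.ne')).neg.div_const 2).congr_deriv ?_
  rw [gdpPdf, abs_of_nonneg hx, show -α - 1 = -(α + 1) by ring]
  field_simp

lemma tendsto_neg_gdpTail_atTop (hα : 0 < α) (hη : 0 < η) :
    Tendsto (fun y => -(1 + y / η) ^ (-α) / 2) atTop (𝓝 0) := by
  have := (tendsto_rpow_neg_atTop hα).comp <|
    tendsto_atTop_add_const_left _ 1 (tendsto_id.atTop_div_const hη)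
  simpa using this.neg.div_const 2

lemma integral_Ioi_gdpPdf (hα : 0 < α) (hη : 0 < η) {t : ℝ} (ht : 0 ≤ t) :
    ∫ x in Ioi t, gdpPdf α η x = (1 + t / η) ^ (-α) / 2 := by
  rw [integral_Ioi_of_hasDerivAt_of_nonneg' (fun x hx => hasDerivAt_neg_gdpTail hη (ht.trans hx))
    (fun x _ => gdpPdf_nonneg hα.le hη.le x) (tendsto_neg_gdpTail_atTop hα hη)]
  ring

lemma gdpMeasure_Ioi (hα : 0 < α) (hη : 0 < η) {t : ℝ} (ht : 0 ≤ t) :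
    gdpMeasure α η (Ioi t) = ENNReal.ofReal ((1 + t / η) ^ (-α) / 2) := by
  rw [gdpMeasure, withDensity_apply _ measurableSet_Ioi, ← integral_Ioi_gdpPdf hα hη ht,
    ofReal_integral_eq_lintegral_ofReal]
  · exact integrableOn_Ioi_deriv_of_nonneg'
      (fun x hx => hasDerivAt_neg_gdpTail hη (ht.trans hx))
      (fun x _ => gdpPdf_nonneg hα.le hη.le x) (tendsto_neg_gdpTail_atTop hα hη)
  · exact ae_of_all _ (gdpPdf_nonneg hα.le hη.le)

lemma gdpMeasure_Iio_neg (t : ℝ) : gdpMeasure α η (Iio (-t)) = gdpMeasure α η (Ioi t) := by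
  have h := (Measure.measurePreserving_neg (volume : Measure ℝ)).setLIntegral_comp_preimage_emb
    measurableEmbedding_neg (fun x => ENNReal.ofReal (gdpPdf α η x)) (Ioi t)
  rw [gdpMeasure, withDensity_apply _ measurableSet_Ioi, withDensity_apply _ measurableSet_Iio,
    ← h]
  simp only [gdpPdf_neg]
  congr 2
  ext x
  simp

lemma gdpMeasure_lt_abs (hα : 0 < α) (hη : 0 < η) {t : ℝ} (ht : 0 ≤ t) :
    gdpMeasure α η {x | t < |x|} = ENNReal.ofReal ((1 + t / η) ^ (-α)) := by
  have hset : {x : ℝ | t < |x|} = Ioi t ∪ Iio (-t) := by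
    ext x
    simp [lt_abs, lt_neg]
  rw [hset, measure_union (Ioi_disjoint_Iio_of_le (by linarith)) measurableSet_Iio,
    gdpMeasure_Iio_neg, gdpMeasure_Ioi hα hη ht,
    ← ENNReal.ofReal_add (by positivity) (by positivity), add_halves]

lemma gdpMeasure_ne_zero (hα : 0 < α) (hη : 0 < η) : gdpMeasure α η ≠ 0 := by
  intro h
  have := gdpMeasure_lt_abs hα hη le_rfl
  simp [h] at this

end GDP

lemma one_add_rpow_neg_le_inv_mul {α s : ℝ} (hα : 1 ≤ α) (hs : 0 < s) :
    (1 + s) ^ (-α) ≤ (α * s)⁻¹ := by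
  rw [Real.rpow_neg (by positivity)]
  calc ((1 + s) ^ α)⁻¹ ≤ (1 + α * s)⁻¹ :=
        inv_anti₀ (by positivity) (one_add_mul_self_le_rpow_one_add (by linarith) hα)
    _ ≤ (α * s)⁻¹ := inv_anti₀ (by positivity) (by linarith)

lemma summable_abs_mul_abs_and_tsum_le {a b : ℕ → ℝ} {r : ℝ} {m : ℕ} (hr0 : 0 ≤ r)
    (hr1 : r < 1) (ha : ∀ n, |a n| ≤ r ^ (n + m)) (hb : ∀ n, |b n| ≤ r ^ (n + m)) :
    Summable (fun n => |a n| * |b n|) ∧ ∑' n, |a n| * |b n| ≤ (r ^ 2) ^ m / (1 - r ^ 2) := by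
  have hr2 : r ^ 2 < 1 := pow_lt_one₀ hr0 hr1 two_ne_zero
  have hle : ∀ n, |a n| * |b n| ≤ (r ^ 2) ^ m * (r ^ 2) ^ n := fun n =>
    calc |a n| * |b n| ≤ r ^ (n + m) * r ^ (n + m) :=
          mul_le_mul (ha n) (hb n) (abs_nonneg _) ((abs_nonneg _).trans (ha n))
      _ = (r ^ 2) ^ m * (r ^ 2) ^ n := by ring
  have hgeom := (summable_geometric_of_lt_one (sq_nonneg r) hr2).mul_left ((r ^ 2) ^ m)
  have hsum : Summable (fun n => |a n| * |b n|) :=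
    .of_nonneg_of_le (fun n => by positivity) hle hgeom
  refine ⟨hsum, (hsum.tsum_le_tsum hle hgeom).trans_eq ?_⟩
  rw [tsum_mul_left, tsum_geometric_of_lt_one (sq_nonneg r) hr2, div_eq_mul_inv]

section Constant

open Real

/-- With `L = -log q`, the choice `C = (1 + log (1 + A)) / L` gives
`L K ≥ 1 + log (1 + A) + log (P / ε²)`, hence `P A q^K ≤ e⁻¹ ε²`. -/
lemma exists_const_mul_pow_lt {q A : ℝ} (hq0 : 0 < q) (hq1 : q < 1) (hA : 0 ≤ A) :
    ∃ C > 0, ∀ P ε : ℝ, 1 ≤ P → 0 < ε → ε < 1 → ∀ K : ℕ,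
      C * (1 + log (P / ε ^ 2)) ≤ K → P * A * q ^ K < ε := by
  set L := -log q with hL
  have hL0 : 0 < L := neg_pos.mpr (log_neg hq0 hq1)
  have hlogA : 0 ≤ log (1 + A) := log_nonneg (by linarith)
  refine ⟨(1 + log (1 + A)) / L, by positivity, fun P ε hP hε0 hε1 K hK => ?_⟩
  have hε2 : 0 < ε ^ 2 := by positivity
  have hℓ : 0 ≤ log (P / ε ^ 2) := log_nonneg ((one_le_div hε2).mpr (by nlinarith))
  have hLK : 1 + log (1 + A) + log (P / ε ^ 2) ≤ L * K := by
    rw [div_mul_eq_mul_div, div_le_iff₀ hL0] at hK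
    nlinarith
  have hqK : q ^ K = exp (-(L * K)) := by
    rw [hL, neg_mul, neg_neg, ← exp_log hq0, ← exp_nat_mul, exp_log hq0]
    ring_nf
  calc P * A * q ^ K ≤ P * (1 + A) * exp (-(1 + log (1 + A) + log (P / ε ^ 2))) := by
        rw [hqK]
        gcongr
        linarith
    _ = exp (-1) * ε ^ 2 := by
        rw [neg_add, neg_add, exp_add, exp_add, exp_neg (log _), exp_log (by linarith),
          exp_neg (log _), exp_log (by positivity)]
        field_simp
    _ < ε := by
        have := exp_lt_one_iff.mpr (show (-1 : ℝ) < 0 by norm_num)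
        nlinarith

lemma exists_truncation_const {δ ρ : ℝ} (hδ : 2 < δ) (hρ : 0 < ρ) :
    ∃ C > 0, ∀ P ε : ℝ, 1 ≤ P → 0 < ε → ε < 1 → ∀ K : ℕ, C * (1 + log (P / ε ^ 2)) ≤ K →
      P * (ρ * (2 / δ) ^ (K + 1) / (1 - 2 / δ)) < ε ∧
        (2⁻¹ ^ 2) ^ (K + 1) / (1 - 2⁻¹ ^ 2) < ε := by
  have hq1 : 2 / δ < 1 := (div_lt_one (by linarith)).mpr hδ
  obtain ⟨C₁, hC₁, hbad⟩ := exists_const_mul_pow_lt (by positivity) hq1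
    (A := ρ * (2 / δ) / (1 - 2 / δ)) (div_nonneg (by positivity) (by linarith))
  obtain ⟨C₂, -, hgood⟩ := exists_const_mul_pow_lt (q := 4⁻¹) (A := 3⁻¹)
    (by norm_num) (by norm_num) (by norm_num)
  refine ⟨max C₁ C₂, lt_max_of_lt_left hC₁, fun P ε hP hε0 hε1 K hK => ?_⟩
  have hℓ : 0 ≤ 1 + log (P / ε ^ 2) := by
    have := log_nonneg ((one_le_div (by positivity)).mpr (by nlinarith : ε ^ 2 ≤ P))
    linarith
  have hK₁ := (mul_le_mul_of_nonneg_right (le_max_left C₁ C₂) hℓ).trans hK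
  have hK₂ := (mul_le_mul_of_nonneg_right (le_max_right C₁ C₂) hℓ).trans hK
  constructor
  · calc P * (ρ * (2 / δ) ^ (K + 1) / (1 - 2 / δ))
          = P * (ρ * (2 / δ) / (1 - 2 / δ)) * (2 / δ) ^ K := by ring
      _ < ε := hbad P ε hP hε0 hε1 K hK₁
  · calc (2⁻¹ ^ 2 : ℝ) ^ (K + 1) / (1 - 2⁻¹ ^ 2) = 3⁻¹ * 4⁻¹ ^ K := by ring
      _ ≤ P * 3⁻¹ * 4⁻¹ ^ K := by gcongr; exact le_mul_of_one_le_left (by norm_num) hP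
      _ < ε := hgood P ε hP hε0 hε1 K hK₂

end Constant

section Tail

variable {Ω : Type*} [MeasurableSpace Ω] {μ : Measure Ω}

lemma measure_lt_abs_of_map_eq_gdpMeasure {X : Ω → ℝ} {α η t : ℝ}
    (hX : μ.map X = gdpMeasure α η) (hα : 0 < α) (hη : 0 < η) (ht : 0 ≤ t) :
    μ {ω | t < |X ω|} = ENNReal.ofReal ((1 + t / η) ^ (-α)) := by
  have hXm : AEMeasurable X μ := .of_map_ne_zero (hX ▸ gdpMeasure_ne_zero hα hη)
  rw [← gdpMeasure_lt_abs hα hη ht, ← hX,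
    Measure.map_apply₀ hXm (measurableSet_lt measurable_const measurable_abs).nullMeasurableSet]
  rfl

lemma measure_two_inv_pow_lt_abs_le {X : Ω → ℝ} {δ ρ : ℝ} {k : ℕ} (hδ : 1 ≤ δ) (hρ : 0 < ρ)
    (hX : μ.map X = gdpMeasure (δ ^ k) ρ) :
    μ {ω | 2⁻¹ ^ k < |X ω|} ≤ ENNReal.ofReal (ρ * (2 / δ) ^ k) := by
  rw [measure_lt_abs_of_map_eq_gdpMeasure hX (by positivity) hρ (by positivity)]
  refine ENNReal.ofReal_le_ofReal ((one_add_rpow_neg_le_inv_mul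
    (one_le_pow₀ hδ) (by positivity)).trans_eq ?_)
  simp only [div_pow, inv_pow]
  field_simp

lemma measure_iUnion_le_geometric {s : ℕ → Set Ω} {c q : ℝ} {m : ℕ} (hc : 0 ≤ c) (hq0 : 0 ≤ q)
    (hq1 : q < 1) (hs : ∀ n, μ (s n) ≤ ENNReal.ofReal (c * q ^ (n + m))) :
    μ (⋃ n, s n) ≤ ENNReal.ofReal (c * q ^ m / (1 - q)) := by
  have hsum : HasSum (fun n => c * q ^ (n + m)) (c * q ^ m / (1 - q)) := by
    rw [div_eq_mul_inv]
    exact ((hasSum_geometric_of_lt_one hq0 hq1).mul_left _).congr_fun fun n => by ring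
  rw [← hsum.tsum_eq, ENNReal.ofReal_tsum_of_nonneg (fun n => by positivity) hsum.summable]
  exact (measure_iUnion_le _).trans (ENNReal.tsum_le_tsum hs)

lemma ofReal_one_sub_lt_measure [IsProbabilityMeasure μ] {s : Set Ω} {ε : ℝ} (hε : ε ≤ 1)
    (h : μ sᶜ < ENNReal.ofReal ε) : ENNReal.ofReal (1 - ε) < μ s := by
  by_contra! hle
  have hε0 : 0 < ε := ENNReal.ofReal_pos.mp (zero_le.trans_lt h)
  have := calc (1 : ℝ≥0∞) = μ univ := measure_univ.symm
    _ ≤ μ s + μ sᶜ := by rw [← union_compl_self s]; exact measure_union_le _ _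
    _ < ENNReal.ofReal (1 - ε) + ENNReal.ofReal ε :=
        ENNReal.add_lt_add_of_le_of_lt (measure_ne_top _ _) hle h
    _ = 1 := by
        rw [← ENNReal.ofReal_add (by linarith) hε0.le, sub_add_cancel, ENNReal.ofReal_one]
  exact this.false

end Tail

theorem gdp_truncation_close_condition_I_general {Ω : Type*} [MeasurableSpace Ω] (μ : Measure Ω)
    [IsProbabilityMeasure μ] (δ ρ : ℝ) (hδ : 2 < δ) (hρ : 0 < ρ)
    (P : ℕ) (hP : 0 < P) (Λ : Fin P × ℕ → Ω → ℝ)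
    (hlaw : ∀ (p : Fin P) (k : ℕ), 1 ≤ k →
      Measure.map (Λ (p, k)) μ = gdpMeasure (δ ^ k) ρ) :
    ∃ C : ℝ, 0 < C ∧ ∀ ε : ℝ, 0 < ε → ε < 1 → ∀ K₀ : ℕ,
      C * (1 + Real.log ((P : ℝ) / ε ^ 2)) ≤ (K₀ : ℝ) → ∀ K : ℕ, K₀ ≤ K →
      ENNReal.ofReal (1 - ε) <
        μ {ω | ∀ i j : Fin P,
          Summable (fun k : ℕ => |Λ (i, k + K + 1) ω| * |Λ (j, k + K + 1) ω|) ∧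
          (∑' k : ℕ, |Λ (i, k + K + 1) ω| * |Λ (j, k + K + 1) ω|) < ε} := by
  obtain ⟨C, hC, hsmall⟩ := exists_truncation_const hδ hρ
  refine ⟨C, hC, fun ε hε0 hε1 K₀ hK₀ K hK => ?_⟩
  obtain ⟨hbad, hgood⟩ :=
    hsmall P ε (Nat.one_le_cast.mpr hP) hε0 hε1 K (hK₀.trans (Nat.cast_le.mpr hK))
  set G := {ω | ∀ p n, |Λ (p, n + K + 1) ω| ≤ 2⁻¹ ^ (n + K + 1)}
  have hGc : μ Gᶜ < ENNReal.ofReal ε := by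
    have hcompl : Gᶜ = ⋃ p, ⋃ n, {ω | 2⁻¹ ^ (n + K + 1) < |Λ (p, n + K + 1) ω|} := by
      ext ω
      simp [G]
    have hrow p := measure_iUnion_le_geometric (m := K + 1) hρ.le (by positivity)
      ((div_lt_one (by linarith)).mpr hδ)
      fun n => measure_two_inv_pow_lt_abs_le (by linarith) hρ (hlaw p (n + K + 1) (by omega))
    calc μ Gᶜ ≤ ∑ _ : Fin P, ENNReal.ofReal (ρ * (2 / δ) ^ (K + 1) / (1 - 2 / δ)) :=
          hcompl ▸ (measure_iUnion_fintype_le μ _).trans (Finset.sum_le_sum fun p _ => hrow p)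
      _ = ENNReal.ofReal (P * (ρ * (2 / δ) ^ (K + 1) / (1 - 2 / δ))) := by
          rw [Finset.sum_const, Finset.card_univ, Fintype.card_fin, nsmul_eq_mul,
            ENNReal.ofReal_mul (Nat.cast_nonneg _), ENNReal.ofReal_natCast]
      _ < ENNReal.ofReal ε := (ENNReal.ofReal_lt_ofReal_iff hε0).mpr hbad
  refine (ofReal_one_sub_lt_measure hε1.le hGc).trans_le (measure_mono fun ω hω i j => ?_)
  obtain ⟨hs, hle⟩ := summable_abs_mul_abs_and_tsum_le (m := K + 1) (by norm_num) (by norm_num)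
    (hω i) (hω j)
  exact ⟨hs, hle.trans_lt hgood⟩

theorem gdp_truncation_close_condition_I {Ω : Type*} [MeasurableSpace Ω] (μ : Measure Ω)
    [IsProbabilityMeasure μ] (δ ρ : ℝ) (hδ : 2 < δ) (hρ : 0 < ρ)
    (P : ℕ) (hP : 0 < P) (Λ : Fin P × ℕ → Ω → ℝ) (hmeas : ∀ pk, Measurable (Λ pk))
    (hindep : ProbabilityTheory.iIndepFun Λ μ)
    (hlaw : ∀ (p : Fin P) (k : ℕ), 1 ≤ k →
      Measure.map (Λ (p, k)) μ = gdpMeasure (δ ^ k) ρ) :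
    ∃ C : ℝ, 0 < C ∧ ∀ ε : ℝ, 0 < ε → ε < 1 → ∀ K₀ : ℕ,
      C * (1 + Real.log ((P : ℝ) / ε ^ 2)) ≤ (K₀ : ℝ) → ∀ K : ℕ, K₀ ≤ K →
      ENNReal.ofReal (1 - ε) <
        μ {ω | ∀ i j : Fin P,
          Summable (fun k : ℕ => |Λ (i, k + K + 1) ω| * |Λ (j, k + K + 1) ω|) ∧
          (∑' k : ℕ, |Λ (i, k + K + 1) ω| * |Λ (j, k + K + 1) ω|) < ε} :=
  gdp_truncation_close_condition_I_general μ δ ρ hδ hρ P hP Λ hlaw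
end
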